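/- Let F be a field of characteristic 2 and n ≥ 1. Let A be the group algebra of (ℤ/2ℤ)^n over F, i.e., the 2^n-dimensional commutative associative unital algebra with basis {e_x : x ∈ (ℤ/2ℤ)^n} and multiplication e_x e_y = e_{x+y}. Then A is both descendingly flexible and descendingly alternative, and l(A) = n = log₂(dim A). -/

import Mathlib

/-!
Both descending properties hold in any commutative algebra of characteristic 2 in which every
square is a scalar: `(ab)a = a²b` is then a multiple of `b`, and each of the symmetric sums
equals `2abc = 0`. In `F[(ℤ/2)ⁿ]` squaring is additive and `e_x² = e_{2x} = 1`.

For the length, the augmentation ideal `I` satisfies `Iⁿ⁺¹ = 0`: among `n + 1` elements of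
`(ℤ/2)ⁿ` some nonempty subfamily sums to `0`, and the corresponding product of the
`e_{x_i} - 1` vanishes. Writing each letter as `s = ε(s) + (s - ε(s))` with `s - ε(s) ∈ I` and
expanding the vanishing product of the `s - ε(s)`, every word of length `k > n` becomes a
combination of shorter subwords, so `l(S) ≤ n` for all `S`. Conversely a word of length `k` in
the generators `e_{δ_i}` is some `e_x` with at most `k` nonzero coordinates, so
`e_{(1,…,1)}` needs `n` letters.
-/

open Pointwise

namespace DescLength

variable (F : Type*) [Field F] {A : Type*} [NonUnitalNonAssocRing A] [Module F A]

/-- `Word S n a` means that `a` is a word of length `n` in letters from `S`,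
i.e. a product of `n` elements of `S` with some arrangement of brackets. -/
inductive Word (S : Set A) : ℕ → A → Prop
  | of {a : A} : a ∈ S → Word S 1 a
  | mul {m n : ℕ} {a b : A} : Word S m a → Word S n b → Word S (m + n) (a * b)

/-- The set of words of length exactly `n` in letters from `S`. -/
def words (S : Set A) (n : ℕ) : Set A := {a | Word S n a}

/-- `Lin_k(S)`, where the submodule `o` plays the role of `Lin_0(S)`:
`o = ⊥` if `A` is non-unital and `o = span F {e}` if `A` is unital with unity `e`. -/
def lin (o : Submodule F A) (S : Set A) (k : ℕ) : Submodule F A :=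
  o ⊔ Submodule.span F (⋃ i ∈ Finset.Icc 1 k, words S i)

/-- `Lin_∞(S)`. -/
def linInfty (o : Submodule F A) (S : Set A) : Submodule F A := ⨆ k, lin F o S k

/-- `S` is a generating set for `A`. -/
def Generates (o : Submodule F A) (S : Set A) : Prop := linInfty F o S = ⊤

/-- The length of the set `S`: `l(S) = min {k | Lin_k(S) = Lin_∞(S)}`. -/
noncomputable def len (o : Submodule F A) (S : Set A) : ℕ := sInf {k | lin F o S k = linInfty F o S}

/-- The length of the algebra `A`: `l(A) = max {l(S) | S generates A}`. -/
noncomputable def algLen (o : Submodule F A) : ℕ := sSup {n | ∃ S : Set A, Generates F o S ∧ len F o S = n}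

/-- The sequence of differences `d_k(S)`. -/
noncomputable def dseq (o : Submodule F A) (S : Set A) : ℕ → ℕ
  | 0 => Module.finrank F o
  | k + 1 => Module.finrank F (lin F o S (k + 1)) - Module.finrank F (lin F o S k)

/-- `o` is the span of the words of length zero: `⊥` if `A` has no two-sided unity,
and the span of the unity `e` otherwise. -/
def IsUnitalSpan (o : Submodule F A) : Prop :=
  ((¬ ∃ e : A, ∀ x : A, e * x = x ∧ x * e = x) ∧ o = ⊥) ∨
  (∃ e : A, (∀ x : A, e * x = x ∧ x * e = x) ∧ o = Submodule.span F {e})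

def Ql (x y z : A) : Set A :=
  {x*(z*y), x*(y*z), y*(x*z), y*(z*x), x*y, y*x, x*z, z*x, y*z, z*y, x, y, z}

def Qr (x y z : A) : Set A :=
  {(x*z)*y, (z*x)*y, (y*z)*x, (z*y)*x, x*y, y*x, x*z, z*x, y*z, z*y, x, y, z}

def Pset (x y z : A) : Set A := Ql x y z ∪ Qr x y z

/-- `A` is mixing: `(xy)z, z(xy) ∈ Lin_1(P(x,y,z))` for all `x, y, z`. -/
def IsMixing (o : Submodule F A) : Prop :=
  ∀ x y z : A, (x*y)*z ∈ o ⊔ Submodule.span F (Pset x y z) ∧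
    z*(x*y) ∈ o ⊔ Submodule.span F (Pset x y z)

/-- `A` is left sliding: `(xy)z ∈ Lin_1(Q_l(x,y,z))` for all `x, y, z`. -/
def IsLeftSliding (o : Submodule F A) : Prop :=
  ∀ x y z : A, (x*y)*z ∈ o ⊔ Submodule.span F (Ql x y z)

/-- `A` is right sliding: `z(xy) ∈ Lin_1(Q_r(x,y,z))` for all `x, y, z`. -/
def IsRightSliding (o : Submodule F A) : Prop :=
  ∀ x y z : A, z*(x*y) ∈ o ⊔ Submodule.span F (Qr x y z)

/-- `Lin_1(a, b, aa, ab, ba)`. -/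
def lin1five (o : Submodule F A) (a b : A) : Submodule F A :=
  o ⊔ Submodule.span F {a, b, a*a, a*b, b*a}

/-- `Lin'_2(a, b, c)`. -/
def lin2' (o : Submodule F A) (a b c : A) : Submodule F A :=
  o ⊔ Submodule.span F {a, b, c, a*b, b*a, b*c, c*b, a*c, c*a}

/-- `A` is descendingly flexible. -/
def IsDescFlexible (o : Submodule F A) : Prop :=
  ∀ a b c : A, (a*b)*a ∈ lin1five F o a b ∧ a*(b*a) ∈ lin1five F o a b ∧
    (a*b)*c + (c*b)*a ∈ lin2' F o a b c ∧ a*(b*c) + c*(b*a) ∈ lin2' F o a b c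

/-- `A` is descendingly alternative. -/
def IsDescAlternative (o : Submodule F A) : Prop :=
  ∀ a b c : A, (b*a)*a ∈ lin1five F o a b ∧ a*(a*b) ∈ lin1five F o a b ∧
    (a*b)*c + (a*c)*b ∈ lin2' F o a b c ∧ a*(b*c) + b*(a*c) ∈ lin2' F o a b c

/-- `S^{(m)}`: the words obtained from a letter of `S` by repeatedly multiplying by a single
letter of `S`, on the left or on the right. -/
def chainWords (S : Set A) : ℕ → Set A
  | 0 => ∅
  | 1 => S
  | n + 2 => chainWords S (n + 1) * S ∪ S * chainWords S (n + 1)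

section

open AddMonoidAlgebra Finset

section Flexibility

variable {F A : Type*} [Field F] [CommRing A] [Algebra F A]

lemma mul_self_mul_mem_lin1five {a : A} (ha : a * a ∈ Submodule.span F {1}) (b : A) :
    a * a * b ∈ lin1five F (Submodule.span F {1}) a b := by
  obtain ⟨c, hc⟩ := Submodule.mem_span_singleton.1 ha
  rw [← hc, smul_mul_assoc, one_mul]
  exact Submodule.mem_sup_right (Submodule.smul_mem _ c (Submodule.subset_span (by simp)))

variable [CharP A 2]

theorem isDescFlexible_of_mul_self_mem (hsq : ∀ a : A, a * a ∈ Submodule.span F {1}) :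
    IsDescFlexible F (Submodule.span F {(1 : A)}) := by
  intro a b c
  refine ⟨?_, ?_, ?_, ?_⟩
  · rw [show a * b * a = a * a * b by ring]
    exact mul_self_mul_mem_lin1five (hsq a) b
  · rw [show a * (b * a) = a * a * b by ring]
    exact mul_self_mul_mem_lin1five (hsq a) b
  · rw [show a * b * c + c * b * a = 2 * (a * b * c) by ring, CharTwo.two_eq_zero, zero_mul]
    exact zero_mem _
  · rw [show a * (b * c) + c * (b * a) = 2 * (a * b * c) by ring, CharTwo.two_eq_zero, zero_mul]
    exact zero_mem _

theorem isDescAlternative_of_mul_self_mem (hsq : ∀ a : A, a * a ∈ Submodule.span F {1}) :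
    IsDescAlternative F (Submodule.span F {(1 : A)}) := by
  intro a b c
  refine ⟨?_, ?_, ?_, ?_⟩
  · rw [show b * a * a = a * a * b by ring]
    exact mul_self_mul_mem_lin1five (hsq a) b
  · rw [show a * (a * b) = a * a * b by ring]
    exact mul_self_mul_mem_lin1five (hsq a) b
  · rw [show a * b * c + a * c * b = 2 * (a * b * c) by ring, CharTwo.two_eq_zero, zero_mul]
    exact zero_mem _
  · rw [show a * (b * c) + b * (a * c) = 2 * (a * b * c) by ring, CharTwo.two_eq_zero, zero_mul]
    exact zero_mem _

end Flexibility

section Words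

variable {F A : Type*} [Field F]

lemma Word.one_le [NonUnitalNonAssocRing A] {S : Set A} {k : ℕ} {a : A} (h : Word S k a) :
    1 ≤ k := by
  induction h with
  | of _ => rfl
  | mul _ _ ih₁ _ => omega

lemma mem_lin_of_word [NonUnitalNonAssocRing A] [Module F A] (o : Submodule F A) {S : Set A}
    {k m : ℕ} {a : A} (h : Word S k a) (hkm : k ≤ m) : a ∈ lin F o S m :=
  Submodule.mem_sup_right <| Submodule.subset_span <|
    Set.mem_biUnion (Finset.mem_coe.2 (Finset.mem_Icc.2 ⟨h.one_le, hkm⟩)) h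

variable [CommRing A] [Algebra F A] {S : Set A}

lemma Word.exists_prod_eq {k : ℕ} {a : A} (h : Word S k a) :
    ∃ f : Fin k → A, (∀ i, f i ∈ S) ∧ ∏ i, f i = a := by
  induction h with
  | @of a ha => exact ⟨fun _ => a, fun _ => ha, by simp⟩
  | mul _ _ ih₁ ih₂ =>
    obtain ⟨f, hf, rfl⟩ := ih₁
    obtain ⟨g, hg, rfl⟩ := ih₂
    refine ⟨Fin.append f g, fun i => ?_, by simp [Fin.prod_univ_add]⟩
    induction i using Fin.addCases <;> simp [hf, hg]

lemma word_prod {ι : Type*} (f : ι → A) {V : Finset ι} (hV : V.Nonempty)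
    (hf : ∀ i ∈ V, f i ∈ S) : Word S #V (∏ i ∈ V, f i) := by
  induction hV using Finset.Nonempty.cons_induction with
  | singleton i => simpa using Word.of (hf i (mem_singleton_self i))
  | cons i V hi _ ih =>
    rw [prod_cons, card_cons, add_comm]
    exact .mul (.of (hf i (mem_cons_self i V))) (ih fun j hj => hf j (mem_cons_of_mem hj))

lemma one_mem_lin {o : Submodule F A} (ho : (1 : A) ∈ o) (S : Set A) (m : ℕ) :
    (1 : A) ∈ lin F o S m :=
  Submodule.mem_sup_left ho

lemma prod_mem_lin {o : Submodule F A} (ho : (1 : A) ∈ o) {ι : Type*} (f : ι → A)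
    {V : Finset ι} {m : ℕ} (hV : #V ≤ m) (hf : ∀ i ∈ V, f i ∈ S) :
    ∏ i ∈ V, f i ∈ lin F o S m := by
  rcases V.eq_empty_or_nonempty with rfl | hne
  · simpa using one_mem_lin ho S m
  · exact mem_lin_of_word o (word_prod f hne hf) hV

end Words

section Stabilization

variable {F A : Type*} [Field F] [CommRing A] [Algebra F A]

lemma prod_eq_zero_of_pow_eq_bot {I : Ideal A} {m : ℕ} (hI : I ^ m = ⊥) {ι : Type*}
    {s : Finset ι} (hs : m ≤ #s) {f : ι → A} (hf : ∀ i ∈ s, f i ∈ I) :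
    ∏ i ∈ s, f i = 0 := by
  have hmem := Ideal.prod_mem_prod hf
  rw [prod_const] at hmem
  simpa [hI] using Ideal.pow_le_pow_right hs hmem

lemma prod_mem_span_prod_ssubset {ι : Type*} [DecidableEq ι] {s : Finset ι} (f : ι → A)
    (c : ι → F) (h : ∏ i ∈ s, (f i - algebraMap F A (c i)) = 0) :
    ∏ i ∈ s, f i ∈ Submodule.span F ((fun t => ∏ i ∈ t, f i) '' {t | t ⊂ s}) := by
  simp_rw [sub_eq_add_neg, ← map_neg, prod_add, ← map_prod] at h
  rw [← sum_erase_add _ _ (mem_powerset_self s), sdiff_self, bot_eq_empty, prod_empty, map_one,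
    mul_one] at h
  rw [← neg_eq_of_add_eq_zero_right h]
  refine neg_mem (sum_mem fun t ht => ?_)
  obtain ⟨hts, hst⟩ := mem_erase.1 ht
  rw [mul_comm, ← Algebra.smul_def]
  exact Submodule.smul_mem _ _
    (Submodule.subset_span ⟨t, ssubset_of_subset_of_ne (mem_powerset.1 hst) hts, rfl⟩)

theorem word_mem_lin_of_pow_eq_bot {I : Ideal A} {m : ℕ} (hI : I ^ (m + 1) = ⊥)
    (hA : ∀ a : A, ∃ c : F, a - algebraMap F A c ∈ I) {S : Set A} {k : ℕ} {a : A}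
    (h : Word S k a) : a ∈ lin F (Submodule.span F {1}) S m := by
  induction k using Nat.strong_induction_on generalizing a with
  | _ k ih =>
  rcases le_or_gt k m with hkm | hmk
  · exact mem_lin_of_word _ h hkm
  obtain ⟨f, hfS, rfl⟩ := h.exists_prod_eq
  choose c hc using fun i => hA (f i)
  have hzero : ∏ i, (f i - algebraMap F A (c i)) = 0 :=
    prod_eq_zero_of_pow_eq_bot hI (by simpa using hmk) fun i _ => hc i
  refine Submodule.span_le.2 ?_ (prod_mem_span_prod_ssubset f c hzero)
  rintro _ ⟨t, ht, rfl⟩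
  rcases t.eq_empty_or_nonempty with rfl | hne
  · simpa using one_mem_lin (Submodule.mem_span_singleton_self 1) S m
  · exact ih _ (by simpa using card_lt_card ht) (word_prod f hne fun i _ => hfS i)

theorem lin_eq_linInfty_of_pow_eq_bot {I : Ideal A} {m : ℕ} (hI : I ^ (m + 1) = ⊥)
    (hA : ∀ a : A, ∃ c : F, a - algebraMap F A c ∈ I) (S : Set A) :
    lin F (Submodule.span F {1}) S m = linInfty F (Submodule.span F {1}) S := by
  refine le_antisymm (le_iSup (lin F _ S) m) (iSup_le fun k => sup_le le_sup_left ?_)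
  rw [Submodule.span_le]
  intro a ha
  obtain ⟨i, -, hi⟩ := Set.mem_iUnion₂.1 ha
  exact word_mem_lin_of_pow_eq_bot hI hA hi

end Stabilization

section Length

variable {F A : Type*} [Field F] [NonUnitalNonAssocRing A] [Module F A] {o : Submodule F A}
  {S : Set A} {m : ℕ}

lemma len_le_of_lin_eq (h : lin F o S m = linInfty F o S) : len F o S ≤ m :=
  Nat.sInf_le h

lemma len_eq_of_lin_eq (h : lin F o S m = linInfty F o S)
    (hlt : ∀ k < m, lin F o S k ≠ linInfty F o S) : len F o S = m :=
  le_antisymm (len_le_of_lin_eq h)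
    (le_csInf ⟨m, h⟩ fun k hk => not_lt.1 fun hkm => hlt k hkm hk)

lemma algLen_eq_of_len_eq (hle : ∀ S : Set A, len F o S ≤ m) (hS : Generates F o S)
    (hlen : len F o S = m) : algLen F o = m := by
  have hbound : ∀ k ∈ {n | ∃ S : Set A, Generates F o S ∧ len F o S = n}, k ≤ m := by
    rintro _ ⟨T, -, rfl⟩
    exact hle T
  exact le_antisymm (csSup_le ⟨m, S, hS, hlen⟩ hbound)
    (le_csSup ⟨m, hbound⟩ ⟨S, hS, hlen⟩)

end Length

section ElementaryAbelian

variable {F G : Type*} [Field F]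

instance (p : ℕ) [AddMonoid G] [CharP F p] : CharP (AddMonoidAlgebra F G) p :=
  charP_of_injective_algebraMap' F p

lemma mul_self_mem_span_one [CharP F 2] [AddCommGroup G] [Module (ZMod 2) G]
    (a : AddMonoidAlgebra F G) : a * a ∈ Submodule.span F {1} := by
  induction a using AddMonoidAlgebra.induction_linear with
  | zero => simp
  | add x y hx hy =>
    rw [add_mul_self_eq, CharTwo.two_eq_zero, zero_mul, zero_mul, add_zero]
    exact add_mem hx hy
  | single x r =>
    rw [single_mul_single, ← two_nsmul, ZModModule.char_nsmul_eq_zero, ← mul_one (r * r),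
      ← smul_single', ← one_def]
    exact Submodule.smul_mem _ _ (Submodule.mem_span_singleton_self 1)

noncomputable def augmentationIdeal (F G : Type*) [Field F] [AddCommMonoid G] :
    Ideal (AddMonoidAlgebra F G) :=
  Ideal.span (Set.range fun x : G => single x 1 - 1)

lemma exists_sub_algebraMap_mem_augmentationIdeal [AddCommMonoid G] (a : AddMonoidAlgebra F G) :
    ∃ c : F, a - algebraMap F _ c ∈ augmentationIdeal F G := by
  induction a using AddMonoidAlgebra.induction_linear with
  | zero => exact ⟨0, by simp⟩
  | add x y hx hy =>
    obtain ⟨c, hc⟩ := hx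
    obtain ⟨d, hd⟩ := hy
    exact ⟨c + d, by simpa [map_add, add_sub_add_comm] using add_mem hc hd⟩
  | single x r =>
    refine ⟨r, ?_⟩
    have hmem : single x 1 - 1 ∈ augmentationIdeal F G := Ideal.subset_span ⟨x, rfl⟩
    convert Submodule.smul_of_tower_mem _ r hmem using 1
    simp [smul_sub, one_def]

lemma zmod_two_eq_zero_or_eq_one : ∀ a : ZMod 2, a = 0 ∨ a = 1 := by
  decide

lemma prod_sub_one_eq_zero {R ι : Type*} [CommRing R] [CharP R 2] {s : Finset ι}
    (hs : s.Nonempty) {u : ι → R} (hu : ∀ i ∈ s, u i * u i = 1)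
    (hprod : ∏ i ∈ s, u i = 1) :
    ∏ i ∈ s, (u i - 1) = 0 := by
  classical
  obtain ⟨j, hj⟩ := hs
  -- `Q = ∏_{i ≠ j} (u i - 1)` is fixed by each `u i`, `i ≠ j`, hence by `u j = ∏_{i ≠ j} u i`.
  have hfix :
      (∏ i ∈ s.erase j, u i) * ∏ i ∈ s.erase j, (u i - 1) =
        ∏ i ∈ s.erase j, (u i - 1) := by
    rw [← prod_mul_distrib]
    refine prod_congr rfl fun i hi => ?_
    rw [mul_sub, hu i (mem_of_mem_erase hi), mul_one, ← neg_sub, CharTwo.neg_eq]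
  have huj : u j = ∏ i ∈ s.erase j, u i := by
    rw [← mul_prod_erase s u hj] at hprod
    calc u j = u j * (u j * ∏ i ∈ s.erase j, u i) := by rw [hprod, mul_one]
      _ = ∏ i ∈ s.erase j, u i := by rw [← mul_assoc, hu j hj, one_mul]
  rw [← mul_prod_erase s _ hj, sub_mul, one_mul, huj, hfix, sub_self]

lemma exists_nonempty_sum_eq_zero {V ι : Type*} [AddCommGroup V] [Module (ZMod 2) V]
    [FiniteDimensional (ZMod 2) V] [Fintype ι] (h : Module.finrank (ZMod 2) V < Fintype.card ι)
    (v : ι → V) : ∃ T : Finset ι, T.Nonempty ∧ ∑ i ∈ T, v i = 0 := by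
  classical
  obtain ⟨g, hg, i₀, hi₀⟩ :=
    Fintype.not_linearIndependent_iff (v := v) |>.1 fun hli => h.not_ge hli.fintype_card_le_finrank
  refine ⟨({i | g i ≠ 0} : Finset ι), ⟨i₀, by simpa using hi₀⟩, ?_⟩
  rw [← hg, sum_filter]
  refine sum_congr rfl fun i _ => ?_
  rcases zmod_two_eq_zero_or_eq_one (g i) with h | h <;> simp [h]

end ElementaryAbelian

section GroupAlgebra

variable {F : Type*} [Field F] {n : ℕ}

theorem augmentationIdeal_pow_eq_bot [CharP F 2] :
    augmentationIdeal F (Fin n → ZMod 2) ^ (n + 1) = ⊥ := by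
  rw [augmentationIdeal, Ideal.span, Submodule.span_pow, Submodule.span_eq_bot]
  intro _ hmem
  obtain ⟨f, rfl⟩ := Set.mem_pow.1 hmem
  choose x hx using fun i => (f i).2
  obtain ⟨T, hT, hsum⟩ := exists_nonempty_sum_eq_zero (by simp) x
  rw [List.prod_ofFn, ← prod_mul_prod_compl T]
  simp_rw [← hx]
  rw [prod_sub_one_eq_zero hT, zero_mul]
  · intro i _
    rw [single_mul_single, ← two_nsmul, ZModModule.char_nsmul_eq_zero, one_mul, one_def]
  · rw [prod_single, hsum, prod_const_one, one_def]

def stdGens (F : Type*) [Field F] (n : ℕ) : Set (AddMonoidAlgebra F (Fin n → ZMod 2)) :=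
  Set.range fun i => single (Pi.single i 1) 1

lemma single_mem_lin_stdGens (x : Fin n → ZMod 2) :
    single x (1 : F) ∈ lin F (Submodule.span F {1}) (stdGens F n) n := by
  have hx : ∑ i ∈ ({i | x i ≠ 0} : Finset (Fin n)), Pi.single i (1 : ZMod 2) = x := by
    ext j
    rw [Finset.sum_apply, sum_pi_single]
    rcases zmod_two_eq_zero_or_eq_one (x j) with h | h <;> simp [h]
  have hprod : ∏ i ∈ ({i | x i ≠ 0} : Finset (Fin n)), single (Pi.single i 1) (1 : F) =
      single x 1 := by
    rw [prod_single, prod_const_one, hx]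
  rw [← hprod]
  refine prod_mem_lin (Submodule.mem_span_singleton_self 1) _ ?_ fun i _ => ⟨i, rfl⟩
  exact hammingNorm_le_card_fintype.trans_eq (Fintype.card_fin n)

lemma lin_stdGens_eq_top : lin F (Submodule.span F {1}) (stdGens F n) n = ⊤ := by
  rw [eq_top_iff, ← (AddMonoidAlgebra.basis _ F).span_eq, Submodule.span_le]
  rintro _ ⟨x, rfl⟩
  exact single_mem_lin_stdGens x

lemma hammingNorm_add_le {ι : Type*} [Fintype ι] {β : ι → Type*} [∀ i, AddZeroClass (β i)]
    [∀ i, DecidableEq (β i)] (x y : ∀ i, β i) :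
    hammingNorm (x + y) ≤ hammingNorm x + hammingNorm y := by
  classical
  refine (card_le_card fun i hi => ?_).trans (card_union_le _ _)
  simp only [mem_union, mem_filter, mem_univ, true_and, Pi.add_apply] at hi ⊢
  by_contra! h
  simp [h.1, h.2] at hi

lemma Word.exists_eq_single_hammingNorm_le {k : ℕ} {a : AddMonoidAlgebra F (Fin n → ZMod 2)}
    (h : Word (stdGens F n) k a) : ∃ x, a = single x 1 ∧ hammingNorm x ≤ k := by
  induction h with
  | of ha =>
    obtain ⟨i, rfl⟩ := ha
    refine ⟨_, rfl, card_le_one.2 fun j hj l hl => ?_⟩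
    simp [Pi.single_apply] at hj hl
    rw [hj, hl]
  | mul _ _ ih₁ ih₂ =>
    obtain ⟨x, rfl, hx⟩ := ih₁
    obtain ⟨y, rfl, hy⟩ := ih₂
    exact ⟨x + y, by rw [single_mul_single, one_mul], (hammingNorm_add_le x y).trans (by omega)⟩

lemma lin_stdGens_ne_top {k : ℕ} (hk : k < n) :
    lin F (Submodule.span F {1}) (stdGens F n) k ≠ ⊤ := by
  set φ := (AddMonoidAlgebra.basis (Fin n → ZMod 2) F).coord 1
  have hφ : ∀ x : Fin n → ZMod 2, hammingNorm x ≤ k → φ (single x 1) = 0 := by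
    intro x hx
    have hx1 : x ≠ 1 := by
      rintro rfl
      simp [hammingNorm] at hx
      omega
    simp [φ, ← basis_apply, hx1]
  have hle : lin F (Submodule.span F {1}) (stdGens F n) k ≤ LinearMap.ker φ := by
    refine sup_le ?_ (Submodule.span_le.2 ?_)
    · rw [Submodule.span_le, Set.singleton_subset_iff, one_def]
      exact hφ 0 (by simp)
    · intro a ha
      obtain ⟨i, hik, hi⟩ := Set.mem_iUnion₂.1 ha
      obtain ⟨x, rfl, hx⟩ := Word.exists_eq_single_hammingNorm_le hi
      exact hφ x (hx.trans (mem_Icc.1 hik).2)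
  intro htop
  have h1 := hle (htop ▸ Submodule.mem_top : single (1 : Fin n → ZMod 2) (1 : F) ∈ _)
  simp [φ, ← basis_apply] at h1

variable [CharP F 2]

lemma groupAlgebra_lin_eq_linInfty (S : Set (AddMonoidAlgebra F (Fin n → ZMod 2))) :
    lin F (Submodule.span F {1}) S n = linInfty F (Submodule.span F {1}) S :=
  lin_eq_linInfty_of_pow_eq_bot augmentationIdeal_pow_eq_bot
    exists_sub_algebraMap_mem_augmentationIdeal S

theorem groupAlgebra_algLen_eq :
    algLen F (Submodule.span F {(1 : AddMonoidAlgebra F (Fin n → ZMod 2))}) = n := by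
  have hgen : linInfty F (Submodule.span F {1}) (stdGens F n) = ⊤ := by
    rw [← groupAlgebra_lin_eq_linInfty, lin_stdGens_eq_top]
  refine algLen_eq_of_len_eq (fun S => len_le_of_lin_eq (groupAlgebra_lin_eq_linInfty S)) hgen ?_
  exact len_eq_of_lin_eq (groupAlgebra_lin_eq_linInfty _) fun k hk => hgen ▸ lin_stdGens_ne_top hk

end GroupAlgebra

end

theorem groupAlgebra_zmod2_pow_general {F : Type*} [Field F] [CharP F 2] (n : ℕ) :
    IsDescFlexible F (Submodule.span F {(1 : AddMonoidAlgebra F (Fin n → ZMod 2))}) ∧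
    IsDescAlternative F (Submodule.span F {(1 : AddMonoidAlgebra F (Fin n → ZMod 2))}) ∧
    algLen F (Submodule.span F {(1 : AddMonoidAlgebra F (Fin n → ZMod 2))}) = n ∧
    Module.finrank F (AddMonoidAlgebra F (Fin n → ZMod 2)) = 2 ^ n ∧
    n = Nat.log 2 (Module.finrank F (AddMonoidAlgebra F (Fin n → ZMod 2))) := by
  have hdim : Module.finrank F (AddMonoidAlgebra F (Fin n → ZMod 2)) = 2 ^ n := by
    rw [Module.finrank_eq_card_basis (AddMonoidAlgebra.basis _ F), Fintype.card_fun, ZMod.card,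
      Fintype.card_fin]
  exact ⟨isDescFlexible_of_mul_self_mem mul_self_mem_span_one,
    isDescAlternative_of_mul_self_mem mul_self_mem_span_one, groupAlgebra_algLen_eq, hdim,
    by rw [hdim, Nat.log_pow one_lt_two]⟩

/-- Let `F` be a field of characteristic 2 and `n ≥ 1`. The group algebra
`A = F[(ℤ/2ℤ)^n]` (with basis `{e_x}` and multiplication `e_x e_y = e_{x+y}`) is both
descendingly flexible and descendingly alternative, and `l(A) = n = log₂(dim A)`,
with `dim A = 2^n`. Here `Lin_0 = span F {1}` since `A` is unital. -/
theorem groupAlgebra_zmod2_pow {F : Type*} [Field F] [CharP F 2] (n : ℕ) (hn : 1 ≤ n) :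
    IsDescFlexible F (Submodule.span F {(1 : AddMonoidAlgebra F (Fin n → ZMod 2))}) ∧
    IsDescAlternative F (Submodule.span F {(1 : AddMonoidAlgebra F (Fin n → ZMod 2))}) ∧
    algLen F (Submodule.span F {(1 : AddMonoidAlgebra F (Fin n → ZMod 2))}) = n ∧
    Module.finrank F (AddMonoidAlgebra F (Fin n → ZMod 2)) = 2 ^ n ∧
    n = Nat.log 2 (Module.finrank F (AddMonoidAlgebra F (Fin n → ZMod 2))) :=
  groupAlgebra_zmod2_pow_general n

end DescLength
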